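/- arXiv:math/0402154 — 2 statements merged into one kernel-verified Lean document; each statement's English description precedes it below -/
import Mathlib

section
/- Let G be a connected linear algebraic group over an algebraically closed field of characteristic zero with trivial character group, acting linearly on a finite-dimensional vector space V. Then the ring of invariants k[V]^G is an integrally closed (normal) domain, and it is a unique factorization domain. -/
/-!
STATEMENT 1: Let `G` be a connected linear algebraic group over an algebraically closed field
`k` of characteristic zero with trivial character group, acting linearly on a finite-dimensional
vector space `V`.  Then the invariant ring `k[V]^G` is an integrally closed (normal) domain and
a unique factorization domain.

We model `G` as a subgroup of `GL(n, k)` (acting linearly on `V = k^n`) which is Zariski closed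
in `GL(n, k)`, connected for the Zariski topology, and such that every regular character
`G → k^*` (i.e. a group homomorphism given by a polynomial in the matrix entries and the inverse
of the determinant) is trivial.
-/

open MvPolynomial

noncomputable section

/-- The Zariski topology on the space of `n × n` matrices over `k`. -/
def matrixZariski (n : ℕ) (k : Type) [Field k] :
    TopologicalSpace (Matrix (Fin n) (Fin n) k) :=
  TopologicalSpace.generateFrom
    {s | ∃ p : MvPolynomial (Fin n × Fin n) k,
      s = {A | MvPolynomial.eval (fun ij => A ij.1 ij.2) p ≠ 0}}

/-- The image of a subgroup of `GL(n, k)` in the space of matrices. -/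
def matrixCarrier {n : ℕ} {k : Type} [Field k]
    (G : Subgroup (Matrix.GeneralLinearGroup (Fin n) k)) : Set (Matrix (Fin n) (Fin n) k) :=
  (fun g : Matrix.GeneralLinearGroup (Fin n) k => (g : Matrix (Fin n) (Fin n) k)) '' (G : Set _)

/-- The subalgebra of `G`-invariant polynomial functions on `V = k^n`. -/
def invariantAlgebra {n : ℕ} {k : Type} [Field k]
    (G : Subgroup (Matrix.GeneralLinearGroup (Fin n) k)) :
    Subalgebra k (MvPolynomial (Fin n) k) where
  carrier := {f | ∀ g ∈ G, MvPolynomial.aeval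
      (fun i => ∑ j, ((g : Matrix (Fin n) (Fin n) k) i j) • (X j : MvPolynomial (Fin n) k)) f
    = f}
  add_mem' := fun hf hg => by intro g hgG; rw [map_add, hf g hgG, hg g hgG]
  mul_mem' := fun hf hg => by intro g hgG; rw [map_mul, hf g hgG, hg g hgG]
  algebraMap_mem' := fun c => by intro g hgG; simp

/-!
Let `p` be a prime factor of a nonzero invariant `f`. Each `g ∈ G` maps `p` to a prime factor of
`f`, so `g • p` is proportional to one of finitely many primes. Being proportional to `p`, and
being proportional to one of the factors not associated to `p`, are Zariski closed conditions on
the matrix `g`, disjoint on `G`; since `G` is connected and `1` satisfies the first, `G` fixes the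
line through `p`. The scalar by which `g` acts on that line is a regular character of `G`, hence
trivial, so `p` is invariant. Thus every divisor of a nonzero invariant is invariant, and a
subring of a UFD with this property is again a UFD, hence integrally closed.
-/

def Subring.IsFactoriallyClosed {A : Type*} [CommRing A] (S : Subring A) : Prop :=
  ∀ ⦃x f : A⦄, f ∈ S → f ≠ 0 → x ∣ f → x ∈ S

namespace Subring.IsFactoriallyClosed

variable {A : Type*} [CommRing A] {S : Subring A}

theorem of_prime_dvd_mem [UniqueFactorizationMonoid A] (hunit : ∀ u : A, IsUnit u → u ∈ S)
    (hprime : ∀ ⦃p f : A⦄, f ∈ S → f ≠ 0 → Prime p → p ∣ f → p ∈ S) : S.IsFactoriallyClosed := by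
  intro x
  induction x using UniqueFactorizationMonoid.induction_on_prime with
  | h₁ => rintro f - hf0 hdvd; exact absurd (zero_dvd_iff.mp hdvd) hf0
  | h₂ u hu => exact fun _ _ _ _ => hunit u hu
  | h₃ a p _ hp ih =>
    intro f hf hf0 hdvd
    exact S.mul_mem (hprime hf hf0 hp (dvd_of_mul_right_dvd hdvd))
      (ih hf hf0 (dvd_of_mul_left_dvd hdvd))

theorem dvd_iff (hS : S.IsFactoriallyClosed) {a b : S} : a ∣ b ↔ (a : A) ∣ b := by
  refine ⟨map_dvd S.subtype, fun ⟨t, ht⟩ => ?_⟩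
  rcases eq_or_ne b 0 with rfl | hb
  · exact dvd_zero a
  have ht' : t ∈ S := hS b.2 (by exact_mod_cast hb) (Dvd.intro_left _ ht.symm)
  exact ⟨⟨t, ht'⟩, Subtype.ext ht⟩

theorem isUnit_iff (hS : S.IsFactoriallyClosed) {a : S} : IsUnit a ↔ IsUnit (a : A) := by
  simp only [isUnit_iff_dvd_one, hS.dvd_iff, OneMemClass.coe_one]

theorem prime (hS : S.IsFactoriallyClosed) {p : S} (hp : Prime (p : A)) : Prime p := by
  refine ⟨fun h => hp.ne_zero (by simp [h]), fun h => hp.not_isUnit (hS.isUnit_iff.mp h),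
    fun a b hab => ?_⟩
  simp only [hS.dvd_iff, Subring.coe_mul] at hab ⊢
  exact hp.dvd_or_dvd hab

theorem uniqueFactorizationMonoid [IsDomain A] [UniqueFactorizationMonoid A]
    (hS : S.IsFactoriallyClosed) : UniqueFactorizationMonoid S := by
  refine UniqueFactorizationMonoid.of_exists_prime_factors fun a ha => ?_
  obtain ⟨a, haS⟩ := a
  have ha0 : a ≠ 0 := fun h => ha (Subtype.ext h)
  clear ha
  induction a using UniqueFactorizationMonoid.induction_on_prime with
  | h₁ => exact absurd rfl ha0
  | h₂ u hu =>
    exact ⟨0, by simp, by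
      simpa using (associated_one_iff_isUnit.mpr ((hS.isUnit_iff (a := ⟨u, haS⟩)).mpr hu)).symm⟩
  | h₃ a p ha hp ih =>
    have hpS : p ∈ S := hS haS ha0 (dvd_mul_right p a)
    have haS' : a ∈ S := hS haS ha0 (dvd_mul_left a p)
    obtain ⟨f, hf, hprod⟩ := ih haS' ha
    refine ⟨⟨p, hpS⟩ ::ₘ f, ?_, ?_⟩
    · exact Multiset.forall_mem_cons.mpr ⟨hS.prime hp, hf⟩
    · simpa using hprod.mul_left (⟨p, hpS⟩ : S)

end Subring.IsFactoriallyClosed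

namespace MvPolynomial

section LinearSubst

variable {σ R : Type*} [Fintype σ] [CommRing R]

def linearSubst (A : Matrix σ σ R) : MvPolynomial σ R →ₐ[R] MvPolynomial σ R :=
  aeval fun i => ∑ j, A i j • X j

theorem linearSubst_X (A : Matrix σ σ R) (i : σ) : linearSubst A (X i) = ∑ j, A i j • X j :=
  aeval_X _ _

theorem linearSubst_C (A : Matrix σ σ R) (c : R) : linearSubst A (C c) = C c :=
  aeval_C _ _

theorem linearSubst_mul (A B : Matrix σ σ R) :
    linearSubst (A * B) = (linearSubst B).comp (linearSubst A) := by
  refine algHom_ext fun i => ?_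
  simp only [AlgHom.comp_apply, linearSubst_X, map_sum, map_smul, Matrix.mul_apply,
    Finset.smul_sum, Finset.sum_smul, smul_smul]
  exact Finset.sum_comm

theorem linearSubst_one [DecidableEq σ] : linearSubst (1 : Matrix σ σ R) = AlgHom.id R _ := by
  refine algHom_ext fun i => ?_
  simp [linearSubst_X, Matrix.one_apply]

def linearSubstEquiv [DecidableEq σ] (g : GL σ R) : MvPolynomial σ R ≃ₐ[R] MvPolynomial σ R :=
  AlgEquiv.ofAlgHom (linearSubst g) (linearSubst ↑g⁻¹)
    (by rw [← linearSubst_mul, ← Units.val_mul, inv_mul_cancel, Units.val_one, linearSubst_one])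
    (by rw [← linearSubst_mul, ← Units.val_mul, mul_inv_cancel, Units.val_one, linearSubst_one])

theorem linearSubst_eq_zero_iff [DecidableEq σ] (g : GL σ R) {p : MvPolynomial σ R} :
    linearSubst ↑g p = 0 ↔ p = 0 :=
  (linearSubstEquiv g).map_eq_zero_iff

theorem prime_linearSubst_iff [DecidableEq σ] (g : GL σ R) {p : MvPolynomial σ R} :
    Prime (linearSubst ↑g p) ↔ Prime p :=
  MulEquiv.prime_iff (linearSubstEquiv g)

theorem exists_coeff_linearSubst_eq_eval (p : MvPolynomial σ R) (μ : σ →₀ ℕ) :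
    ∃ P : MvPolynomial (σ × σ) R, ∀ A : Matrix σ σ R,
      coeff μ (linearSubst A p) = eval (fun ij => A ij.1 ij.2) P := by
  let generic : MvPolynomial σ R →ₐ[R] MvPolynomial σ (MvPolynomial (σ × σ) R) :=
    aeval fun i => ∑ j, C (X (i, j)) * X j
  refine ⟨coeff μ (generic p), fun A => ?_⟩
  have : (mapAlgHom (aeval fun ij : σ × σ => A ij.1 ij.2)).comp generic = linearSubst A := by
    refine algHom_ext fun i => ?_
    simp [generic, linearSubst_X, Algebra.smul_def, mapAlgHom_apply]
  rw [← this, AlgHom.comp_apply, mapAlgHom_apply, coeff_map]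
  rfl

end LinearSubst

section Field

variable {σ K : Type*} [Field K]

theorem eq_C_mul_of_associated {x q : MvPolynomial σ K} (h : Associated x q) {μ : σ →₀ ℕ}
    (hμ : coeff μ q ≠ 0) : x = C (coeff μ x / coeff μ q) * q := by
  obtain ⟨u, hu⟩ := h.symm
  obtain ⟨c, -, hc⟩ := isUnit_iff_eq_C_of_isReduced.mp u.isUnit
  rw [← hu, hc, mul_comm q, coeff_C_mul, mul_div_cancel_right₀ _ hμ]

theorem associated_iff_coeff_mul_eq {x q : MvPolynomial σ K} (hx : x ≠ 0) (hq : q ≠ 0) :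
    Associated x q ↔ ∀ μ ν, coeff ν q * coeff μ x = coeff μ q * coeff ν x := by
  obtain ⟨μ, hμ⟩ := ne_zero_iff.mp hq
  constructor
  · intro h ν ν'
    rw [eq_C_mul_of_associated h hμ, coeff_C_mul, coeff_C_mul]
    ring
  · intro h
    have hx' : x = C (coeff μ x / coeff μ q) * q := by
      ext ν
      rw [coeff_C_mul, div_mul_eq_mul_div, eq_div_iff hμ]
      linear_combination -(h μ ν)
    have hc : coeff μ x / coeff μ q ≠ 0 := fun hc => hx (by rw [hx', hc, C_0, zero_mul])
    rw [hx']
    exact associated_unit_mul_left q _ (hc.isUnit.map C)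

end Field

end MvPolynomial

theorem IsPreconnected.subset_left_of_subset_union_of_isClosed {α : Type*} [TopologicalSpace α]
    {s u v : Set α} (hs : IsPreconnected s) (hu : IsClosed u) (hv : IsClosed v)
    (hsuv : s ⊆ u ∪ v) (huv : s ∩ (u ∩ v) = ∅) (hsu : (s ∩ u).Nonempty) : s ⊆ u := by
  refine (isPreconnected_iff_subset_of_disjoint_closed.mp hs u v hu hv hsuv huv).resolve_right
    fun hsv => ?_
  obtain ⟨x, hxs, hxu⟩ := hsu
  exact (huv ▸ ⟨hxs, hxu, hsv hxs⟩ : x ∈ (∅ : Set α))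

def IsRegularCharacter {n : ℕ} {k : Type} [Field k]
    {G : Subgroup (Matrix.GeneralLinearGroup (Fin n) k)} (χ : G →* kˣ) : Prop :=
  ∃ (p : MvPolynomial (Fin n × Fin n) k) (m : ℕ), ∀ g : G,
    (χ g : k) * ((g : Matrix.GeneralLinearGroup (Fin n) k) : Matrix (Fin n) (Fin n) k).det ^ m
      = MvPolynomial.eval
        (fun ij => ((g : Matrix.GeneralLinearGroup (Fin n) k) :
          Matrix (Fin n) (Fin n) k) ij.1 ij.2) p

section Zariski

attribute [local instance] matrixZariski

variable {k : Type} [Field k] {n : ℕ}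

theorem isClosed_setOf_eval_eq_zero (P : MvPolynomial (Fin n × Fin n) k) :
    IsClosed {A : Matrix (Fin n) (Fin n) k | eval (fun ij => A ij.1 ij.2) P = 0} :=
  isOpen_compl_iff.mp (TopologicalSpace.isOpen_generateFrom_of_mem ⟨P, rfl⟩)

def proportionalLocus (p q : MvPolynomial (Fin n) k) : Set (Matrix (Fin n) (Fin n) k) :=
  {A | ∀ μ ν, coeff ν q * coeff μ (linearSubst A p) = coeff μ q * coeff ν (linearSubst A p)}

theorem isClosed_proportionalLocus (p q : MvPolynomial (Fin n) k) :
    IsClosed (proportionalLocus p q) := by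
  choose P hP using exists_coeff_linearSubst_eq_eval p
  have : proportionalLocus p q = ⋂ μ, ⋂ ν, {A : Matrix (Fin n) (Fin n) k |
      eval (fun ij => A ij.1 ij.2) (C (coeff ν q) * P μ - C (coeff μ q) * P ν) = 0} := by
    ext A
    simp only [proportionalLocus, Set.mem_ofPred_eq, Set.mem_iInter, map_sub, map_mul, eval_C,
      sub_eq_zero, hP]
  rw [this]
  exact isClosed_iInter fun μ => isClosed_iInter fun ν => isClosed_setOf_eval_eq_zero _

theorem coe_mem_proportionalLocus_iff (g : GL (Fin n) k) {p q : MvPolynomial (Fin n) k}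
    (hp : p ≠ 0) (hq : q ≠ 0) :
    (g : Matrix (Fin n) (Fin n) k) ∈ proportionalLocus p q ↔ Associated (linearSubst ↑g p) q :=
  (associated_iff_coeff_mul_eq ((linearSubst_eq_zero_iff g).not.mpr hp) hq).symm

variable {G : Subgroup (GL (Fin n) k)}

open UniqueFactorizationMonoid in
theorem associated_linearSubst_of_prime_dvd
    (hconn : IsPreconnected (matrixCarrier G))
    {f p : MvPolynomial (Fin n) k} (hf : f ∈ invariantAlgebra G) (hf0 : f ≠ 0) (hp : Prime p)
    (hpf : p ∣ f) {g : GL (Fin n) k} (hg : g ∈ G) : Associated (linearSubst ↑g p) p := by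
  classical
  have hfactor : ∀ h ∈ G, ∃ q ∈ factors f, Associated (linearSubst ↑h p) q := by
    intro h hh
    have hhp : Prime (linearSubst ↑h p) := (prime_linearSubst_iff h).mpr hp
    refine exists_mem_factors_of_dvd hf0 hhp.irreducible ?_
    have hfix : linearSubst (h : Matrix (Fin n) (Fin n) k) f = f := hf h hh
    simpa only [hfix] using map_dvd (linearSubst ↑h) hpf
  let others := (factors f).toFinset.filter (¬ Associated · p)
  let near := proportionalLocus p p
  let far := ⋃ q ∈ others, proportionalLocus p q
  have hnear {h : GL (Fin n) k} :
      (h : Matrix (Fin n) (Fin n) k) ∈ near ↔ Associated (linearSubst ↑h p) p :=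
    coe_mem_proportionalLocus_iff h hp.ne_zero hp.ne_zero
  have hfar {h : GL (Fin n) k} : (h : Matrix (Fin n) (Fin n) k) ∈ far ↔
      ∃ q ∈ others, Associated (linearSubst ↑h p) q := by
    simp only [far, Set.mem_iUnion₂, exists_prop]
    refine exists_congr fun q => and_congr_right fun hq => ?_
    refine coe_mem_proportionalLocus_iff h hp.ne_zero ?_
    exact (prime_of_factor q (Multiset.mem_toFinset.mp (Finset.mem_filter.mp hq).1)).ne_zero
  have hcover : matrixCarrier G ⊆ near ∪ far := by
    rintro _ ⟨h, hh, rfl⟩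
    obtain ⟨q, hq, hpq⟩ := hfactor h hh
    by_cases hqp : Associated q p
    · exact .inl (hnear.mpr (hpq.trans hqp))
    · exact .inr (hfar.mpr ⟨q, Finset.mem_filter.mpr ⟨Multiset.mem_toFinset.mpr hq, hqp⟩, hpq⟩)
  have hdisj : matrixCarrier G ∩ (near ∩ far) = ∅ := by
    refine Set.eq_empty_iff_forall_notMem.mpr ?_
    rintro _ ⟨⟨h, -, rfl⟩, hn, hfr⟩
    obtain ⟨q, hq, hpq⟩ := hfar.mp hfr
    exact (Finset.mem_filter.mp hq).2 (hpq.symm.trans (hnear.mp hn))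
  have hone : Associated (linearSubst ↑(1 : GL (Fin n) k) p) p := by
    rw [Units.val_one, linearSubst_one]
    rfl
  have hsub : matrixCarrier G ⊆ near :=
    hconn.subset_left_of_subset_union_of_isClosed (isClosed_proportionalLocus p p)
      (others.finite_toSet.isClosed_biUnion fun q _ => isClosed_proportionalLocus p q)
      hcover hdisj ⟨_, ⟨1, G.one_mem, rfl⟩, hnear.mpr hone⟩
  exact hnear.mp (hsub ⟨g, hg, rfl⟩)

theorem mem_invariantAlgebra_of_associated_linearSubst
    (hchar : ∀ χ : G →* kˣ, IsRegularCharacter χ → χ = 1) {p : MvPolynomial (Fin n) k}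
    (hp : p ≠ 0) (hsemi : ∀ g ∈ G, Associated (linearSubst ↑g p) p) :
    p ∈ invariantAlgebra G := by
  obtain ⟨μ, hμ⟩ := ne_zero_iff.mp hp
  let c : G → k := fun g => coeff μ (linearSubst ↑(g : GL (Fin n) k) p) / coeff μ p
  have hc (g : G) : linearSubst ↑(g : GL (Fin n) k) p = C (c g) * p :=
    eq_C_mul_of_associated (hsemi g g.2) hμ
  have hc0 (g : G) : c g ≠ 0 := fun h0 =>
    hp ((linearSubst_eq_zero_iff _).mp (by rw [hc, h0, C_0, zero_mul]))
  have hc_mul (g h : G) : c (g * h) = c g * c h := by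
    refine C_injective (Fin n) k (mul_right_cancel₀ hp ?_)
    calc C (c (g * h)) * p
        = linearSubst ↑(h : GL (Fin n) k) (linearSubst ↑(g : GL (Fin n) k) p) := by
          rw [← hc, Subgroup.coe_mul, Units.val_mul, linearSubst_mul, AlgHom.comp_apply]
      _ = C (c g * c h) * p := by rw [hc, map_mul, hc, linearSubst_C, C_mul, mul_assoc]
  let χ : G →* kˣ := MonoidHom.mk' (fun g => Units.mk0 (c g) (hc0 g)) fun g h =>
    Units.ext (hc_mul g h)
  have hχ : IsRegularCharacter χ := by
    obtain ⟨P, hP⟩ := exists_coeff_linearSubst_eq_eval p μ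
    refine ⟨C (coeff μ p)⁻¹ * P, 0, fun g => ?_⟩
    simp [χ, c, hP, div_eq_inv_mul]
  intro g hg
  have hc1 : c ⟨g, hg⟩ = 1 := by
    have hχ1 := DFunLike.congr_fun (hchar χ hχ) ⟨g, hg⟩
    exact congrArg Units.val hχ1
  have hfix := hc ⟨g, hg⟩
  rwa [hc1, C_1, one_mul] at hfix

theorem isFactoriallyClosed_invariantAlgebra
    (hconn : IsPreconnected (matrixCarrier G))
    (hchar : ∀ χ : G →* kˣ, IsRegularCharacter χ → χ = 1) :
    (invariantAlgebra G).toSubring.IsFactoriallyClosed := by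
  refine .of_prime_dvd_mem (fun u hu => ?_) fun p f hf hf0 hp hpf =>
    mem_invariantAlgebra_of_associated_linearSubst hchar hp.ne_zero fun g hg =>
      associated_linearSubst_of_prime_dvd hconn hf hf0 hp hpf hg
  obtain ⟨c, -, rfl⟩ := isUnit_iff_eq_C_of_isReduced.mp hu
  exact (invariantAlgebra G).algebraMap_mem c

end Zariski

theorem invariants_normal_and_ufd_general
    (k : Type) [Field k] (n : ℕ)
    (G : Subgroup (Matrix.GeneralLinearGroup (Fin n) k))
    -- `G` is connected (for the Zariski topology):
    (hconn : @IsPreconnected _ (matrixZariski n k) (matrixCarrier G))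
    -- `G` has no nontrivial (regular) characters:
    (hchar : ∀ χ : G →* kˣ,
      (∃ (p : MvPolynomial (Fin n × Fin n) k) (m : ℕ), ∀ g : G,
        (χ g : k) * ((g : Matrix.GeneralLinearGroup (Fin n) k) : Matrix (Fin n) (Fin n) k).det ^ m
          = MvPolynomial.eval
            (fun ij => ((g : Matrix.GeneralLinearGroup (Fin n) k) :
              Matrix (Fin n) (Fin n) k) ij.1 ij.2) p) →
      χ = 1) :
    -- the invariant ring is a normal (integrally closed) domain and a UFD:
    IsDomain (invariantAlgebra G) ∧ IsIntegrallyClosed (invariantAlgebra G) ∧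
      UniqueFactorizationMonoid (invariantAlgebra G) := by
  have hufd : UniqueFactorizationMonoid (invariantAlgebra G) :=
    (isFactoriallyClosed_invariantAlgebra hconn hchar).uniqueFactorizationMonoid
  exact ⟨inferInstance, UniqueFactorizationMonoid.instIsIntegrallyClosed, hufd⟩

theorem invariants_normal_and_ufd
    (k : Type) [Field k] [IsAlgClosed k] [CharZero k] (n : ℕ)
    (G : Subgroup (Matrix.GeneralLinearGroup (Fin n) k))
    -- `G` is Zariski closed in `GL(n, k)`:
    (hclosed : ∃ S : Set (MvPolynomial (Fin n × Fin n) k),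
      matrixCarrier G = {A | IsUnit A.det ∧
        ∀ p ∈ S, MvPolynomial.eval (fun ij => A ij.1 ij.2) p = 0})
    -- `G` is connected (for the Zariski topology):
    (hconn : @IsPreconnected _ (matrixZariski n k) (matrixCarrier G))
    -- `G` has no nontrivial (regular) characters:
    (hchar : ∀ χ : G →* kˣ,
      (∃ (p : MvPolynomial (Fin n × Fin n) k) (m : ℕ), ∀ g : G,
        (χ g : k) * ((g : Matrix.GeneralLinearGroup (Fin n) k) : Matrix (Fin n) (Fin n) k).det ^ m
          = MvPolynomial.eval
            (fun ij => ((g : Matrix.GeneralLinearGroup (Fin n) k) :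
              Matrix (Fin n) (Fin n) k) ij.1 ij.2) p) →
      χ = 1) :
    -- the invariant ring is a normal (integrally closed) domain and a UFD:
    IsDomain (invariantAlgebra G) ∧ IsIntegrallyClosed (invariantAlgebra G) ∧
      UniqueFactorizationMonoid (invariantAlgebra G) :=
  invariants_normal_and_ufd_general k n G hconn hchar

end
end

section
/- Let F(w_0, w_1, w_2) be a homogeneous polynomial of degree d over a field k, and substitute w_0 = x_1 y_2 y_3 ⋯ y_r, w_1 = y_1 x_2 y_3 ⋯ y_r, w_2 = y_1 y_2 x_3 y_4 ⋯ y_r into F, obtaining a polynomial G(x_1, x_2, x_3, y_1, …, y_r). Then G is divisible by y_1^m in k[x_1,x_2,x_3,y_1,…,y_r] if and only if F(1, w_1, w_2) lies in the m-th power of the ideal (w_1, w_2) ⊆ k[w_1, w_2]. -/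
/-!
Substituting monomials `w_i = x^{t_i}` for the variables sends the monomial `w^ν` to the monomial
`x^{∑ ν_i t_i}`, and here `ν ↦ ∑ ν_i t_i` is injective because the `x`-exponents of the image
recover `ν`. So the monomials of `G` are in bijection with those of `F`, and the exponent of `y_1`
in the image of `w^ν` is `ν_1 + ν_2`, as `y_1` occurs once in `w_1` and `w_2` but not in `w_0`.
Likewise, for homogeneous `F` the dehomogenization `F(1, w_1, w_2)` has the monomials `w_1^{ν_1}
w_2^{ν_2}` for `ν` in the support of `F`, without collisions since `ν_0 = d - ν_1 - ν_2`. Both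
conditions therefore say that `ν_1 + ν_2 ≥ m` for every monomial `w^ν` of `F`.
-/

open MvPolynomial

namespace MvPolynomial

variable {R σ τ : Type*} [CommSemiring R]

theorem X_pow_dvd_iff {v : σ} {m : ℕ} {p : MvPolynomial σ R} :
    X v ^ m ∣ p ↔ ∀ μ ∈ p.support, m ≤ μ v := by
  rw [X_pow_eq_monomial, ← Ideal.mem_span_singleton,
    ← Set.image_singleton (f := fun s => monomial s (1 : R)), mem_ideal_span_monomial_image]
  simp [Finsupp.single_le_iff]

theorem X_mul_prod_X_eq_monomial {ι : Type*} (a : σ) (s : Finset ι) (g : ι → σ) :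
    (X a * ∏ j ∈ s, X (g j) : MvPolynomial σ R) =
      monomial (Finsupp.single a 1 + ∑ j ∈ s, Finsupp.single (g j) 1) 1 := by
  rw [← one_mul (1 : R), ← monomial_mul, monomial_sum_one]
  rfl

theorem aeval_monomial_one_eq_mapDomainAlgHom (t : σ → τ →₀ ℕ) :
    aeval (fun i => monomial (t i) (1 : R)) =
      AddMonoidAlgebra.mapDomainAlgHom R R (Finsupp.linearCombination ℕ t).toAddMonoidHom := by
  refine algHom_ext fun i => ?_
  rw [aeval_X]
  simp [X, monomial, AddMonoidAlgebra.mapDomainAlgHom_apply]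

theorem support_aeval_monomial_one [DecidableEq τ] (t : σ → τ →₀ ℕ) {p : MvPolynomial σ R}
    (h : Set.InjOn (Finsupp.linearCombination ℕ t) p.support) :
    (aeval (fun i => monomial (t i) (1 : R)) p).support =
      p.support.image (Finsupp.linearCombination ℕ t) := by
  rw [aeval_monomial_one_eq_mapDomainAlgHom]
  exact Finsupp.mapDomain_support_of_injOn _ h

end MvPolynomial

section Dehomogenization

variable {R : Type*} [CommSemiring R] {n : ℕ}

theorem Finsupp.coe_linearCombination_vecCons_zero_single :
    ⇑(Finsupp.linearCombination ℕ (Matrix.vecCons 0 fun j : Fin n => Finsupp.single j 1)) =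
      Finsupp.tail := by
  ext ν j
  simp [Finsupp.linearCombination_apply, Finsupp.sum_fintype, Fin.sum_univ_succ,
    Finsupp.single_apply, Finsupp.tail_apply]

theorem Finsupp.degree_eq_add_degree_tail (ν : Fin (n + 1) →₀ ℕ) :
    ν.degree = ν 0 + ν.tail.degree := by
  simp [Finsupp.degree_eq_sum, Fin.sum_univ_succ, Finsupp.tail_apply]

theorem MvPolynomial.IsHomogeneous.injOn_tail_support {d : ℕ}
    {F : MvPolynomial (Fin (n + 1)) R} (hF : F.IsHomogeneous d) :
    Set.InjOn Finsupp.tail (F.support : Set (Fin (n + 1) →₀ ℕ)) := by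
  intro ν hν μ hμ h
  have hdeg : ν.degree = μ.degree := by
    simp only [Finsupp.degree_eq_weight_one]
    exact (hF (mem_support_iff.mp hν)).trans (hF (mem_support_iff.mp hμ)).symm
  rw [Finsupp.degree_eq_add_degree_tail, Finsupp.degree_eq_add_degree_tail, h,
    Nat.add_right_cancel_iff] at hdeg
  rw [← Finsupp.cons_tail ν, ← Finsupp.cons_tail μ, h, hdeg]

theorem MvPolynomial.vecCons_one_X_eq_monomial :
    (Matrix.vecCons 1 X : Fin (n + 1) → MvPolynomial (Fin n) R) =
      fun i => monomial (Matrix.vecCons 0 (fun j => Finsupp.single j 1) i) 1 := by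
  funext i
  refine Fin.cases ?_ (fun j => ?_) i <;> simp [X]

theorem MvPolynomial.IsHomogeneous.aeval_vecCons_one_X_mem_pow_idealOfVars_iff {d : ℕ}
    {F : MvPolynomial (Fin (n + 1)) R} (hF : F.IsHomogeneous d) (m : ℕ) :
    MvPolynomial.aeval (Matrix.vecCons 1 X) F ∈ idealOfVars (Fin n) R ^ m ↔
      ∀ ν ∈ F.support, m ≤ ν.tail.degree := by
  have hinj := hF.injOn_tail_support
  rw [← Finsupp.coe_linearCombination_vecCons_zero_single] at hinj
  rw [mem_pow_idealOfVars_iff, vecCons_one_X_eq_monomial, support_aeval_monomial_one _ hinj,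
    Finsupp.coe_linearCombination_vecCons_zero_single, Finset.forall_mem_image]

end Dehomogenization

section Substitution

variable {r : ℕ} (hr : 3 ≤ r)

noncomputable def substExponent (i : Fin 3) : Fin 3 ⊕ Fin r →₀ ℕ :=
  Finsupp.single (Sum.inl i) 1 +
    ∑ j ∈ Finset.univ.erase (Fin.castLE hr i), Finsupp.single (Sum.inr j) 1

theorem substExponent_inl (i i' : Fin 3) :
    substExponent hr i (Sum.inl i') = if i = i' then 1 else 0 := by
  simp [substExponent, Finsupp.single_apply]

theorem substExponent_inr (i : Fin 3) (j : Fin r) :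
    substExponent hr i (Sum.inr j) = if j = Fin.castLE hr i then 0 else 1 := by
  simp [substExponent, Finsupp.single_apply]

theorem linearCombination_substExponent_inl (ν : Fin 3 →₀ ℕ) (i : Fin 3) :
    Finsupp.linearCombination ℕ (substExponent hr) ν (Sum.inl i) = ν i := by
  simp [Finsupp.linearCombination_apply, Finsupp.sum_fintype, substExponent_inl]

theorem linearCombination_substExponent_injective :
    Function.Injective (Finsupp.linearCombination ℕ (substExponent hr)) := fun ν μ h =>
  Finsupp.ext fun i => by
    rw [← linearCombination_substExponent_inl hr ν, ← linearCombination_substExponent_inl hr μ, h]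

theorem linearCombination_substExponent_inr_zero (ν : Fin 3 →₀ ℕ) :
    Finsupp.linearCombination ℕ (substExponent hr) ν (Sum.inr (Fin.castLE hr 0)) = ν 1 + ν 2 := by
  simp [Finsupp.linearCombination_apply, Finsupp.sum_fintype, Fin.sum_univ_three,
    substExponent_inr, Fin.ext_iff]

end Substitution

theorem divisibility_iff_vanishing_order
    {k : Type*} [Field k] (r : ℕ) (hr : 3 ≤ r) (d m : ℕ)
    (F : MvPolynomial (Fin 3) k) (hF : F.IsHomogeneous d)
    -- the substitution `w_i = x_{i+1} · ∏_{j ≠ i+1} y_j`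
    (w : Fin 3 → MvPolynomial (Fin 3 ⊕ Fin r) k)
    (hw : ∀ i : Fin 3, w i =
      X (Sum.inl i) * ∏ j ∈ Finset.univ.erase (Fin.castLE hr i), X (Sum.inr j))
    -- `G` is the result of substituting the `w_i` into `F`
    (G : MvPolynomial (Fin 3 ⊕ Fin r) k) (hG : G = aeval w F) :
    (X (Sum.inr (⟨0, by omega⟩ : Fin r)) : MvPolynomial (Fin 3 ⊕ Fin r) k) ^ m ∣ G ↔
      aeval (![1, X 0, X 1] : Fin 3 → MvPolynomial (Fin 2) k) F ∈
        (Ideal.span ({X 0, X 1} : Set (MvPolynomial (Fin 2) k))) ^ m := by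
  have hw' : w = fun i => monomial (substExponent hr i) 1 :=
    funext fun i => (hw i).trans (X_mul_prod_X_eq_monomial _ _ _)
  have hX : (![X 0, X 1] : Fin 2 → MvPolynomial (Fin 2) k) = X := by
    funext i
    fin_cases i <;> rfl
  rw [← Matrix.range_cons_cons_empty (X 0) (X 1) ![], hX, ← idealOfVars,
    hF.aeval_vecCons_one_X_mem_pow_idealOfVars_iff, hG, hw', X_pow_dvd_iff,
    support_aeval_monomial_one _ (linearCombination_substExponent_injective hr).injOn,
    Finset.forall_mem_image]
  refine forall₂_congr fun ν _ => ?_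
  change m ≤ Finsupp.linearCombination ℕ (substExponent hr) ν (Sum.inr (Fin.castLE hr 0)) ↔ _
  rw [linearCombination_substExponent_inr_zero, Finsupp.degree_eq_sum, Fin.sum_univ_two]
  rfl
end
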